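/- Let ε ∈ (0,1), n > d ≥ 1, and let T be a positive integer with T ≥ 1000·ε⁻¹·log(n/d). Define w_1,…,w_T ∈ ℝ^n by w_{1,i} = d/n and w_{k+1,i} = w_{k,i}·σ_i(w_k) for k ∈ {1,…,T−1}, and set u = (1/T)·Σ_{k=1}^T w_k and Q = {x ∈ ℝ^d : xᵀ(Σ_{i=1}^n u_i a_i a_iᵀ)x ≤ 1}. Then (1/√(1+ε))·Q ⊆ P ⊆ √d·Q, where P = {x ∈ ℝ^d : |⟨a_i, x⟩| ≤ 1 for all i ∈ [n]} and c·Q denotes {c·x : x ∈ Q}. -/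

import Mathlib

open Matrix Finset Pointwise

/-- `σᵢ(v) = aᵢᵀ (Σⱼ vⱼ aⱼ aⱼᵀ)⁻¹ aᵢ`, where `aᵢᵀ` is the `i`-th row of `A`. -/
noncomputable def sigmaFn {n d : ℕ} (A : Matrix (Fin n) (Fin d) ℝ) (v : Fin n → ℝ)
    (i : Fin n) : ℝ :=
  A i ⬝ᵥ ((∑ j : Fin n, v j • vecMulVec (A j) (A j))⁻¹ *ᵥ A i)

lemma dot_sum {d : ℕ} {ι : Type*} (s : Finset ι) (x : Fin d → ℝ) (f : ι → Fin d → ℝ) :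
    x ⬝ᵥ (∑ i ∈ s, f i) = ∑ i ∈ s, x ⬝ᵥ f i := by
  simp only [dotProduct, Finset.sum_apply, Finset.mul_sum]
  exact Finset.sum_comm

lemma Mmat_mulVec {n d : ℕ} (A : Matrix (Fin n) (Fin d) ℝ) (v : Fin n → ℝ) (x : Fin d → ℝ) :
    (∑ i : Fin n, v i • vecMulVec (A i) (A i)) *ᵥ x = ∑ i : Fin n, (v i * (A i ⬝ᵥ x)) • A i := by
  ext j
  simp only [mulVec, dotProduct, Matrix.sum_apply, Matrix.smul_apply, vecMulVec_apply,
    Finset.sum_apply, Pi.smul_apply, smul_eq_mul, Finset.sum_mul, Finset.mul_sum]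
  rw [Finset.sum_comm]
  apply Finset.sum_congr rfl; intro i _; apply Finset.sum_congr rfl; intro k _; ring

lemma quadform {n d : ℕ} (A : Matrix (Fin n) (Fin d) ℝ) (v : Fin n → ℝ) (x : Fin d → ℝ) :
    x ⬝ᵥ ((∑ i : Fin n, v i • vecMulVec (A i) (A i)) *ᵥ x) = ∑ i : Fin n, v i * (A i ⬝ᵥ x) ^ 2 := by
  rw [Mmat_mulVec, dot_sum]
  apply Finset.sum_congr rfl; intro i _
  rw [dotProduct_smul, smul_eq_mul, dotProduct_comm]
  ring

lemma Mmat_isHermitian {n d : ℕ} (A : Matrix (Fin n) (Fin d) ℝ) (v : Fin n → ℝ) :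
    (∑ i : Fin n, v i • vecMulVec (A i) (A i)).IsHermitian := by
  unfold Matrix.IsHermitian
  ext j k
  simp only [conjTranspose_apply, Matrix.sum_apply, Matrix.smul_apply, vecMulVec_apply,
    smul_eq_mul, star_trivial]
  apply Finset.sum_congr rfl; intro i _; ring

lemma mulVec_inj_of_rank {n d : ℕ} (A : Matrix (Fin n) (Fin d) ℝ) (hrank : A.rank = d)
    {x : Fin d → ℝ} (hx : A *ᵥ x = 0) : x = 0 := by
  have h1 : LinearMap.ker A.mulVecLin = ⊥ := by
    have h2 := A.mulVecLin.finrank_range_add_finrank_ker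
    rw [Matrix.rank] at hrank
    have : Module.finrank ℝ (LinearMap.ker A.mulVecLin) = 0 := by
      simp [Module.finrank_fintype_fun_eq_card] at h2
      omega
    exact Submodule.finrank_eq_zero.mp this
  have : x ∈ LinearMap.ker A.mulVecLin := by simpa [Matrix.mulVecLin] using hx
  simpa [h1] using this

lemma Mmat_posDef {n d : ℕ} (A : Matrix (Fin n) (Fin d) ℝ) (hrank : A.rank = d)
    {v : Fin n → ℝ} (hv : ∀ i, 0 < v i) :
    (∑ i : Fin n, v i • vecMulVec (A i) (A i)).PosDef := by
  refine Matrix.PosDef.of_dotProduct_mulVec_pos (Mmat_isHermitian A v) (fun x hx => ?_)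
  rw [star_trivial, quadform]
  have hnn : ∀ i ∈ Finset.univ (α := Fin n), 0 ≤ v i * (A i ⬝ᵥ x) ^ 2 := fun i _ =>
    mul_nonneg (hv i).le (sq_nonneg _)
  apply Finset.sum_pos' hnn
  have : ∃ i, A i ⬝ᵥ x ≠ 0 := by
    by_contra hc
    push_neg at hc
    exact hx (mulVec_inj_of_rank A hrank (funext fun i => by simpa [Matrix.mulVec] using hc i))
  obtain ⟨i, hi⟩ := this
  exact ⟨i, Finset.mem_univ i, mul_pos (hv i) (by positivity)⟩

lemma PD_mul_inv {d : ℕ} {M : Matrix (Fin d) (Fin d) ℝ} (hM : M.PosDef) : M * M⁻¹ = 1 :=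
  Matrix.mul_nonsing_inv M (by simp [isUnit_iff_ne_zero, hM.det_pos.ne'])

lemma PD_inv_mul {d : ℕ} {M : Matrix (Fin d) (Fin d) ℝ} (hM : M.PosDef) : M⁻¹ * M = 1 :=
  Matrix.nonsing_inv_mul M (by simp [isUnit_iff_ne_zero, hM.det_pos.ne'])

lemma sigma_pos' {d : ℕ} {M : Matrix (Fin d) (Fin d) ℝ} (hM : M.PosDef)
    {a : Fin d → ℝ} (ha : a ≠ 0) : 0 < a ⬝ᵥ (M⁻¹ *ᵥ a) := by
  have := hM.inv.dotProduct_mulVec_pos ha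
  rwa [star_trivial] at this

lemma symm_dot {d : ℕ} {M : Matrix (Fin d) (Fin d) ℝ} (hM : M.IsHermitian)
    (x y : Fin d → ℝ) : y ⬝ᵥ (M *ᵥ x) = (M *ᵥ y) ⬝ᵥ x := by
  rw [dotProduct_mulVec]
  congr 1
  rw [← Matrix.vecMul_transpose]
  congr 1
  rw [← Matrix.conjTranspose_eq_transpose_of_trivial, hM.eq]

/-- Cauchy–Schwarz for a positive definite quadratic form. -/
lemma cs_ineq {d : ℕ} {M : Matrix (Fin d) (Fin d) ℝ} (hM : M.PosDef)
    {a : Fin d → ℝ} (ha : a ≠ 0) (x : Fin d → ℝ) :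
    (a ⬝ᵥ x) ^ 2 ≤ (a ⬝ᵥ (M⁻¹ *ᵥ a)) * (x ⬝ᵥ (M *ᵥ x)) := by
  set σ : ℝ := a ⬝ᵥ (M⁻¹ *ᵥ a) with hσdef
  have hσ : 0 < σ := sigma_pos' hM ha
  set z : Fin d → ℝ := M⁻¹ *ᵥ a with hz
  have hMz : M *ᵥ z = a := by
    rw [hz, Matrix.mulVec_mulVec, PD_mul_inv hM, Matrix.one_mulVec]
  set t : ℝ := (a ⬝ᵥ x) / σ with ht
  have h0 : 0 ≤ (x - t • z) ⬝ᵥ (M *ᵥ (x - t • z)) := by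
    have := hM.posSemidef.dotProduct_mulVec_nonneg (x - t • z)
    rwa [star_trivial] at this
  have hexp : (x - t • z) ⬝ᵥ (M *ᵥ (x - t • z)) =
      x ⬝ᵥ (M *ᵥ x) - 2 * t * (a ⬝ᵥ x) + t ^ 2 * σ := by
    rw [Matrix.mulVec_sub, Matrix.mulVec_smul, hMz, dotProduct_sub, sub_dotProduct,
      sub_dotProduct, dotProduct_smul, smul_dotProduct, smul_dotProduct, dotProduct_smul]
    have h1 : z ⬝ᵥ (M *ᵥ x) = a ⬝ᵥ x := by rw [symm_dot hM.1, hMz]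
    have h2 : x ⬝ᵥ a = a ⬝ᵥ x := dotProduct_comm _ _
    have h3 : z ⬝ᵥ a = σ := by rw [hσdef, hz, dotProduct_comm]
    rw [h1, h2, h3]
    simp only [smul_eq_mul]
    ring
  rw [hexp, ht] at h0
  have h4 : 0 ≤ x ⬝ᵥ (M *ᵥ x) - (a ⬝ᵥ x) ^ 2 / σ := by
    have : x ⬝ᵥ M *ᵥ x - 2 * ((a ⬝ᵥ x) / σ) * (a ⬝ᵥ x) + ((a ⬝ᵥ x) / σ) ^ 2 * σ
        = x ⬝ᵥ M *ᵥ x - (a ⬝ᵥ x) ^ 2 / σ := by field_simp; ring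
    rwa [this] at h0
  rw [sub_nonneg, div_le_iff₀ hσ] at h4
  linarith [h4]

lemma sigma_pos {n d : ℕ} (A : Matrix (Fin n) (Fin d) ℝ) (hrank : A.rank = d)
    (ha : ∀ i : Fin n, A i ≠ 0) {v : Fin n → ℝ} (hv : ∀ i, 0 < v i) (i : Fin n) :
    0 < sigmaFn A v i :=
  sigma_pos' (Mmat_posDef A hrank hv) (ha i)

lemma trace_mul_vecMulVec {d : ℕ} (N : Matrix (Fin d) (Fin d) ℝ) (a : Fin d → ℝ) :
    Matrix.trace (N * vecMulVec a a) = a ⬝ᵥ (N *ᵥ a) := by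
  simp only [Matrix.trace, Matrix.diag, Matrix.mul_apply, vecMulVec_apply, mulVec, dotProduct,
    Finset.mul_sum]
  apply Finset.sum_congr rfl; intro j _; apply Finset.sum_congr rfl; intro k _; ring

lemma sum_v_sigma {n d : ℕ} (A : Matrix (Fin n) (Fin d) ℝ) (hrank : A.rank = d)
    {v : Fin n → ℝ} (hv : ∀ i, 0 < v i) :
    ∑ i : Fin n, v i * sigmaFn A v i = d := by
  have hM := Mmat_posDef A hrank hv
  set M : Matrix (Fin d) (Fin d) ℝ := ∑ j : Fin n, v j • vecMulVec (A j) (A j) with hMdef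
  have key : ∑ i : Fin n, v i * sigmaFn A v i = Matrix.trace (M⁻¹ * M) := by
    rw [hMdef, Finset.mul_sum, Matrix.trace_sum]
    apply Finset.sum_congr rfl; intro i _
    rw [Matrix.mul_smul, Matrix.trace_smul, trace_mul_vecMulVec]
    simp [sigmaFn]
  rw [key, PD_inv_mul hM, Matrix.trace_one]
  simp

lemma v_sigma_le_one {n d : ℕ} (A : Matrix (Fin n) (Fin d) ℝ) (hrank : A.rank = d)
    (ha : ∀ i : Fin n, A i ≠ 0) {v : Fin n → ℝ} (hv : ∀ i, 0 < v i) (i : Fin n) :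
    v i * sigmaFn A v i ≤ 1 := by
  have hM := Mmat_posDef A hrank hv
  set M : Matrix (Fin d) (Fin d) ℝ := ∑ j : Fin n, v j • vecMulVec (A j) (A j) with hMdef
  set z : Fin d → ℝ := M⁻¹ *ᵥ A i with hz
  have hσ : sigmaFn A v i = A i ⬝ᵥ z := rfl
  have hσpos : 0 < sigmaFn A v i := sigma_pos A hrank ha hv i
  have hMz : M *ᵥ z = A i := by
    rw [hz, Matrix.mulVec_mulVec, PD_mul_inv hM, Matrix.one_mulVec]
  have hq : z ⬝ᵥ (M *ᵥ z) = sigmaFn A v i := by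
    rw [hMz, dotProduct_comm, hσ]
  have hq2 : z ⬝ᵥ (M *ᵥ z) = ∑ j : Fin n, v j * (A j ⬝ᵥ z) ^ 2 := quadform A v z
  have hterm : v i * (A i ⬝ᵥ z) ^ 2 ≤ ∑ j : Fin n, v j * (A j ⬝ᵥ z) ^ 2 :=
    Finset.single_le_sum (f := fun j => v j * (A j ⬝ᵥ z) ^ 2)
      (fun j _ => mul_nonneg (hv j).le (sq_nonneg _)) (Finset.mem_univ i)
  rw [← hq2, hq, ← hσ] at hterm
  nlinarith [hσpos, hterm]

lemma sigma_avg_le {n d : ℕ} (A : Matrix (Fin n) (Fin d) ℝ) (hrank : A.rank = d)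
    (ha : ∀ i : Fin n, A i ≠ 0) {T : ℕ} (hT : 0 < T) {w : ℕ → Fin n → ℝ}
    (hw : ∀ k < T, ∀ i, 0 < w k i)
    {u : Fin n → ℝ} (hu : u = fun i => (1 / (T : ℝ)) * ∑ k ∈ Finset.range T, w k i)
    (i : Fin n) :
    sigmaFn A u i ≤ (∏ k ∈ Finset.range T, sigmaFn A (w k) i) ^ ((T : ℝ)⁻¹) := by
  have hTR : (0 : ℝ) < T := by exact_mod_cast hT
  have hupos : ∀ j, 0 < u j := by
    intro j
    rw [hu]
    have : 0 < ∑ k ∈ Finset.range T, w k j :=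
      Finset.sum_pos (fun k hk => hw k (Finset.mem_range.mp hk) j)
        (Finset.nonempty_range_iff.mpr hT.ne')
    positivity
  have hP := Mmat_posDef A hrank hupos
  set P : Matrix (Fin d) (Fin d) ℝ := ∑ j : Fin n, u j • vecMulVec (A j) (A j) with hPdef
  set a : Fin d → ℝ := A i with hadef
  set x : Fin d → ℝ := P⁻¹ *ᵥ a with hx
  set s : ℝ := sigmaFn A u i with hsdef
  have hs_eq : s = a ⬝ᵥ x := rfl
  have hspos : 0 < s := sigma_pos A hrank ha hupos i
  have hPx : P *ᵥ x = a := by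
    rw [hx, Matrix.mulVec_mulVec, PD_mul_inv hP, Matrix.one_mulVec]
  -- the quadratic forms
  set q : ℕ → ℝ := fun k => ∑ j : Fin n, w k j * (A j ⬝ᵥ x) ^ 2 with hq
  have hq_nonneg : ∀ k < T, 0 ≤ q k := fun k hk =>
    Finset.sum_nonneg fun j _ => mul_nonneg (hw k hk j).le (sq_nonneg _)
  have hs_avg : s = ∑ k ∈ Finset.range T, (T : ℝ)⁻¹ * q k := by
    have h1 : s = x ⬝ᵥ (P *ᵥ x) := by rw [hPx, dotProduct_comm, hs_eq]
    rw [h1, hPdef, quadform, hu]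
    simp only [hq]
    simp only [Finset.sum_mul, Finset.mul_sum]
    rw [Finset.sum_comm]
    exact Finset.sum_congr rfl fun k _ => Finset.sum_congr rfl fun j _ => by ring
  -- Cauchy–Schwarz for each k
  have hcs : ∀ k < T, s ^ 2 / sigmaFn A (w k) i ≤ q k := by
    intro k hk
    have hMk := Mmat_posDef A hrank (hw k hk)
    have h1 : (a ⬝ᵥ x) ^ 2 ≤ sigmaFn A (w k) i * q k := by
      have := cs_ineq hMk (ha i) x
      rw [quadform] at this
      exact this
    rw [← hs_eq] at h1
    rw [div_le_iff₀ (sigma_pos A hrank ha (hw k hk) i)]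
    linarith [h1]
  have hσpos : ∀ k < T, 0 < sigmaFn A (w k) i := fun k hk => sigma_pos A hrank ha (hw k hk) i
  -- AM-GM
  have hamgm : ∏ k ∈ Finset.range T, q k ^ ((T : ℝ)⁻¹) ≤ s := by
    rw [hs_avg]
    exact Real.geom_mean_le_arith_mean_weighted _ _ _ (fun k _ => by positivity)
      (by simp [Finset.sum_const, hTR.ne']) (fun k hk => hq_nonneg k (Finset.mem_range.mp hk))
  have hlow : ∏ k ∈ Finset.range T, (s ^ 2 / sigmaFn A (w k) i) ^ ((T : ℝ)⁻¹) ≤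
      ∏ k ∈ Finset.range T, q k ^ ((T : ℝ)⁻¹) := by
    apply Finset.prod_le_prod
      (fun k hk => Real.rpow_nonneg
        (div_nonneg (sq_nonneg _) (hσpos k (Finset.mem_range.mp hk)).le) _)
    intro k hk
    exact Real.rpow_le_rpow
      (div_nonneg (sq_nonneg _) (hσpos k (Finset.mem_range.mp hk)).le)
      (hcs k (Finset.mem_range.mp hk)) (by positivity)
  have hprod_eq : ∏ k ∈ Finset.range T, (s ^ 2 / sigmaFn A (w k) i) ^ ((T : ℝ)⁻¹) =
      s ^ 2 / (∏ k ∈ Finset.range T, sigmaFn A (w k) i) ^ ((T : ℝ)⁻¹) := by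
    have h2 : ∀ k ∈ Finset.range T, (s ^ 2 / sigmaFn A (w k) i) ^ ((T : ℝ)⁻¹)
        = (s ^ 2) ^ ((T : ℝ)⁻¹) / (sigmaFn A (w k) i) ^ ((T : ℝ)⁻¹) := fun k hk =>
      Real.div_rpow (by positivity) (hσpos k (Finset.mem_range.mp hk)).le _
    rw [Finset.prod_congr rfl h2, Finset.prod_div_distrib, Finset.prod_const, Finset.card_range,
      ← Real.rpow_natCast ((s^2) ^ ((T:ℝ)⁻¹)) T, ← Real.rpow_mul (by positivity),
      inv_mul_cancel₀ hTR.ne', Real.rpow_one,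
      Real.finset_prod_rpow _ _ (fun k hk => (hσpos k (Finset.mem_range.mp hk)).le)]
  have hGpos : 0 < (∏ k ∈ Finset.range T, sigmaFn A (w k) i) ^ ((T : ℝ)⁻¹) := by
    apply Real.rpow_pos_of_pos
    exact Finset.prod_pos fun k hk => hσpos k (Finset.mem_range.mp hk)
  rw [hprod_eq] at hlow
  have : s ^ 2 / (∏ k ∈ Finset.range T, sigmaFn A (w k) i) ^ ((T : ℝ)⁻¹) ≤ s :=
    le_trans hlow hamgm
  rw [div_le_iff₀ hGpos] at this
  nlinarith [hspos, hGpos, this]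

section Iter
variable {n d T : ℕ} (A : Matrix (Fin n) (Fin d) ℝ) (hd : 1 ≤ d) (hdn : d < n)
  (hrank : A.rank = d) (ha : ∀ i : Fin n, A i ≠ 0) (hT : 0 < T)
  (w : ℕ → Fin n → ℝ)
  (hinit : ∀ i, w 0 i = (d : ℝ) / n)
  (hrec : ∀ k, k + 1 < T → ∀ i, w (k + 1) i = w k i * sigmaFn A (w k) i)

include hd hdn hrank ha hinit hrec in
lemma w_pos : ∀ k, k < T → ∀ i, 0 < w k i := by
  intro k
  induction k with
  | zero =>
    intro _ i
    rw [hinit i]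
    have h0 : (0:ℝ) < d := by exact_mod_cast hd
    have h1 : (0:ℝ) < n := Nat.cast_pos.mpr (by omega)
    positivity
  | succ k ih =>
    intro hk i
    rw [hrec k hk i]
    exact mul_pos (ih (by omega) i) (sigma_pos A hrank ha (ih (by omega)) i)

include hd hdn hrank ha hinit hrec hT in
lemma prod_sigma_le (i : Fin n) :
    ∏ k ∈ Finset.range T, sigmaFn A (w k) i ≤ (n : ℝ) / d := by
  have hwp := w_pos A hd hdn hrank ha w hinit hrec
  have htele : ∀ m, m < T → ∏ k ∈ Finset.range m, sigmaFn A (w k) i = w m i / w 0 i := by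
    intro m
    induction m with
    | zero => intro _; simp [(hwp 0 hT i).ne']
    | succ m ih =>
      intro hm
      rw [Finset.prod_range_succ, ih (by omega), hrec m hm i]
      field_simp
  have hd0 : (0:ℝ) < d := by exact_mod_cast hd
  have hn0 : (0:ℝ) < n := Nat.cast_pos.mpr (by omega)
  have hw0 : w 0 i = (d:ℝ)/n := hinit i
  obtain ⟨m, rfl⟩ : ∃ m, T = m + 1 := ⟨T - 1, by omega⟩
  rw [Finset.prod_range_succ, htele m (by omega)]
  have hle := v_sigma_le_one A hrank ha (hwp m (by omega)) i
  have hw0pos : 0 < w 0 i := hwp 0 hT i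
  calc w m i / w 0 i * sigmaFn A (w m) i = (w m i * sigmaFn A (w m) i) / w 0 i := by ring
    _ ≤ 1 / w 0 i := by gcongr
    _ = (n:ℝ)/d := by rw [hw0]; field_simp

include hd hdn hrank ha hinit hrec in
lemma sum_w_eq : ∀ k, k < T → ∑ i : Fin n, w k i = d := by
  have hwp := w_pos A hd hdn hrank ha w hinit hrec
  intro k
  induction k with
  | zero =>
    intro _
    simp only [hinit]
    rw [Finset.sum_const, Finset.card_univ, Fintype.card_fin, nsmul_eq_mul]
    have hn0 : (n:ℝ) ≠ 0 := Nat.cast_ne_zero.mpr (by omega)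
    field_simp
  | succ k ih =>
    intro hk
    have : ∑ i : Fin n, w (k+1) i = ∑ i : Fin n, w k i * sigmaFn A (w k) i :=
      Finset.sum_congr rfl fun i _ => hrec k hk i
    rw [this, sum_v_sigma A hrank (hwp k (by omega))]

end Iter

lemma numeric_bound {n d T : ℕ} (hd : 1 ≤ d) (hdn : d < n) (hT : 0 < T)
    {ε : ℝ} (hε : ε ∈ Set.Ioo (0:ℝ) 1)
    (hTbig : (T : ℝ) ≥ 1000 * ε⁻¹ * Real.log ((n : ℝ) / d)) :
    ((n : ℝ) / d) ^ ((T : ℝ)⁻¹) ≤ 1 + ε := by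
  obtain ⟨hε0, hε1⟩ := hε
  have hd0 : (0:ℝ) < d := by exact_mod_cast hd
  have hnd : (1:ℝ) < (n:ℝ)/d := by
    rw [lt_div_iff₀ hd0]
    simpa using (by exact_mod_cast hdn : (d:ℝ) < n)
  have hL : 0 ≤ Real.log ((n:ℝ)/d) := Real.log_nonneg hnd.le
  have hTR : (0:ℝ) < T := by exact_mod_cast hT
  have h1 : 1000 * Real.log ((n:ℝ)/d) ≤ (T:ℝ) * ε := by
    have := mul_le_mul_of_nonneg_left hTbig hε0.le
    calc 1000 * Real.log ((n:ℝ)/d) = ε * (1000 * ε⁻¹ * Real.log ((n:ℝ)/d)) := by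
          field_simp
      _ ≤ ε * T := this
      _ = (T:ℝ) * ε := mul_comm _ _
  have h2 : (T:ℝ)⁻¹ * Real.log ((n:ℝ)/d) ≤ ε / 1000 := by
    rw [inv_mul_le_iff₀ hTR]
    nlinarith
  rw [Real.rpow_def_of_pos (by linarith)]
  calc Real.exp (Real.log ((n:ℝ)/d) * (T:ℝ)⁻¹) ≤ Real.exp (ε/1000) :=
        Real.exp_le_exp.mpr (by rw [mul_comm]; exact h2)
    _ ≤ (1 - ε/1000)⁻¹ := by
        have hpos : 0 < 1 - ε/1000 := by linarith
        rw [show Real.exp (ε/1000) = (Real.exp (-(ε/1000)))⁻¹ by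
          rw [Real.exp_neg, inv_inv]]
        apply inv_anti₀ hpos
        linarith [Real.add_one_le_exp (-(ε/1000))]
    _ ≤ 1 + ε := by
        rw [inv_le_iff_one_le_mul₀ (by linarith)]
        nlinarith

/-- Main correctness result of the exact fixed point iteration: with `w₁ = (d/n)·𝟏`,
`w_{k+1,i} = w_{k,i}·σᵢ(w_k)` and `T ≥ 1000·ε⁻¹·log(n/d)`, the average `u` of the first `T`
iterates defines an ellipsoid `Q = {x : xᵀ(Σᵢ uᵢ aᵢaᵢᵀ)x ≤ 1}` with
`(1/√(1+ε))·Q ⊆ P ⊆ √d·Q`, where `P = {x : |⟨aᵢ,x⟩| ≤ 1 ∀i}`.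
(The iterates are indexed by `k ∈ {0, …, T−1}` here.) -/
theorem exact_iteration_gives_good_rounding
    (n d T : ℕ) (hd : 1 ≤ d) (hdn : d < n) (hT : 0 < T)
    (A : Matrix (Fin n) (Fin d) ℝ) (hrank : A.rank = d) (ha : ∀ i : Fin n, A i ≠ 0)
    (ε : ℝ) (hε : ε ∈ Set.Ioo (0 : ℝ) 1)
    (hTbig : (T : ℝ) ≥ 1000 * ε⁻¹ * Real.log ((n : ℝ) / d))
    (w : ℕ → Fin n → ℝ)
    (hinit : ∀ i, w 0 i = (d : ℝ) / n)
    (hrec : ∀ k, k + 1 < T → ∀ i, w (k + 1) i = w k i * sigmaFn A (w k) i)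
    (u : Fin n → ℝ) (hu : u = fun i => (1 / (T : ℝ)) * ∑ k ∈ Finset.range T, w k i) :
    (1 / Real.sqrt (1 + ε)) •
        {x : Fin d → ℝ | x ⬝ᵥ ((∑ i : Fin n, u i • vecMulVec (A i) (A i)) *ᵥ x) ≤ 1} ⊆
        {x : Fin d → ℝ | ∀ i : Fin n, |A i ⬝ᵥ x| ≤ 1} ∧
      {x : Fin d → ℝ | ∀ i : Fin n, |A i ⬝ᵥ x| ≤ 1} ⊆
        Real.sqrt d •
          {x : Fin d → ℝ | x ⬝ᵥ ((∑ i : Fin n, u i • vecMulVec (A i) (A i)) *ᵥ x) ≤ 1} := by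
  have hwp := w_pos A hd hdn hrank ha w hinit hrec
  have hTR : (0:ℝ) < T := by exact_mod_cast hT
  have hd0 : (0:ℝ) < d := by exact_mod_cast hd
  have hupos : ∀ j, 0 < u j := by
    intro j
    rw [hu]
    have : 0 < ∑ k ∈ Finset.range T, w k j :=
      Finset.sum_pos (fun k hk => hwp k (Finset.mem_range.mp hk) j)
        (Finset.nonempty_range_iff.mpr hT.ne')
    positivity
  have hMu : (∑ i : Fin n, u i • vecMulVec (A i) (A i)).PosDef := Mmat_posDef A hrank hupos
  have hσu : ∀ i, sigmaFn A u i ≤ 1 + ε := by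
    intro i
    refine (sigma_avg_le A hrank ha hT hwp hu i).trans ?_
    refine le_trans (Real.rpow_le_rpow
      (Finset.prod_nonneg fun k hk => (sigma_pos A hrank ha (hwp k (Finset.mem_range.mp hk)) i).le)
      (prod_sigma_le A hd hdn hrank ha hT w hinit hrec i) (by positivity)) ?_
    exact numeric_bound hd hdn hT hε hTbig
  have hsum_u : ∑ j : Fin n, u j = d := by
    rw [hu]
    rw [← Finset.mul_sum, Finset.sum_comm]
    rw [Finset.sum_congr rfl fun k hk =>
      sum_w_eq A hd hdn hrank ha w hinit hrec k (Finset.mem_range.mp hk)]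
    rw [Finset.sum_const, Finset.card_range, nsmul_eq_mul]
    field_simp
  obtain ⟨hε0, hε1⟩ := hε
  have hsq : (0:ℝ) < Real.sqrt (1 + ε) := Real.sqrt_pos.mpr (by linarith)
  constructor
  · rintro y ⟨x, hx, rfl⟩
    simp only [Set.mem_setOf_eq] at hx ⊢
    intro i
    have hq0 : 0 ≤ x ⬝ᵥ ((∑ i : Fin n, u i • vecMulVec (A i) (A i)) *ᵥ x) := by
      rw [quadform]
      exact Finset.sum_nonneg fun j _ => mul_nonneg (hupos j).le (sq_nonneg _)
    have hcs : (A i ⬝ᵥ x) ^ 2 ≤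
        sigmaFn A u i * (x ⬝ᵥ ((∑ i : Fin n, u i • vecMulVec (A i) (A i)) *ᵥ x)) :=
      cs_ineq hMu (ha i) x
    have hb : (A i ⬝ᵥ x) ^ 2 ≤ 1 + ε := by
      calc (A i ⬝ᵥ x) ^ 2 ≤ sigmaFn A u i *
            (x ⬝ᵥ ((∑ i : Fin n, u i • vecMulVec (A i) (A i)) *ᵥ x)) := hcs
        _ ≤ (1 + ε) * 1 := by
            apply mul_le_mul (hσu i) hx hq0 (by linarith)
        _ = 1 + ε := mul_one _
    have habs : |A i ⬝ᵥ x| ≤ Real.sqrt (1 + ε) := Real.abs_le_sqrt hb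
    rw [dotProduct_smul, smul_eq_mul, abs_mul]
    have hc : |1 / Real.sqrt (1 + ε)| = 1 / Real.sqrt (1 + ε) := abs_of_pos (by positivity)
    rw [hc]
    calc 1 / Real.sqrt (1 + ε) * |A i ⬝ᵥ x| ≤ 1 / Real.sqrt (1 + ε) * Real.sqrt (1 + ε) := by
          gcongr
      _ = 1 := by field_simp
  · intro x hx
    simp only [Set.mem_setOf_eq] at hx
    have hsd : (0:ℝ) < Real.sqrt d := Real.sqrt_pos.mpr hd0
    refine Set.mem_smul_set.mpr ⟨(Real.sqrt d)⁻¹ • x, ?_, ?_⟩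
    · simp only [Set.mem_setOf_eq]
      rw [quadform]
      have hterm : ∀ j : Fin n, u j * (A j ⬝ᵥ ((Real.sqrt d)⁻¹ • x)) ^ 2
          = (d:ℝ)⁻¹ * (u j * (A j ⬝ᵥ x) ^ 2) := by
        intro j
        rw [dotProduct_smul, smul_eq_mul, mul_pow]
        have : ((Real.sqrt d)⁻¹) ^ 2 = (d:ℝ)⁻¹ := by
          rw [inv_pow, Real.sq_sqrt hd0.le]
        rw [this]
        ring
      rw [Finset.sum_congr rfl fun j _ => hterm j, ← Finset.mul_sum]
      have hsum : ∑ j : Fin n, u j * (A j ⬝ᵥ x) ^ 2 ≤ d := by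
        calc ∑ j : Fin n, u j * (A j ⬝ᵥ x) ^ 2 ≤ ∑ j : Fin n, u j := by
              apply Finset.sum_le_sum
              intro j _
              have h1 : (A j ⬝ᵥ x) ^ 2 ≤ 1 := by
                nlinarith [hx j, abs_nonneg (A j ⬝ᵥ x), sq_abs (A j ⬝ᵥ x)]
              nlinarith [(hupos j).le, h1]
          _ = d := hsum_u
      calc (d:ℝ)⁻¹ * ∑ j : Fin n, u j * (A j ⬝ᵥ x) ^ 2 ≤ (d:ℝ)⁻¹ * d := by gcongr
        _ = 1 := by field_simp
    · rw [smul_smul, mul_inv_cancel₀ hsd.ne', one_smul]
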